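/- The interval-freeness hypothesis on the tuples tᵢ in the theorems on counting cannot be dropped: for the closed aggregate atom E = count{1̄..2̄ : p} ≥ 1̄ (where p is a ground atom), the translation τE is the formula ⊤ → p, while the disjunction ⋁_{Δ⊆A, |[Δ]|=1} ⋀_{(i,r)∈Δ} τ∨((Lᵢ)ʳ_{xᵢ}) prescribed by the theorem is the empty disjunction ⊥; and ⊤ → p is not strongly equivalent to ⊥. -/
import Mathlib


namespace AG

/-! Infinitary propositional formulas (Truszczyński), satisfaction, reducts,
stable models, and strong equivalence. Conjunctions and disjunctions over
arbitrary sets of formulas are represented by (Type-valued) indexed families. -/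

inductive Formula (σ : Type) : Type 1 where
  | atom : σ → Formula σ
  | conj : (ι : Type) → (ι → Formula σ) → Formula σ
  | disj : (ι : Type) → (ι → Formula σ) → Formula σ
  | impl : Formula σ → Formula σ → Formula σ

namespace Formula

def bot {σ : Type} : Formula σ := disj Empty (fun e => e.elim)

def top {σ : Type} : Formula σ := conj Empty (fun e => e.elim)

def neg {σ : Type} (F : Formula σ) : Formula σ := impl F bot

def and {σ : Type} (F G : Formula σ) : Formula σ :=
  conj Bool (fun b => if b then F else G)

def or {σ : Type} (F G : Formula σ) : Formula σ :=
  disj Bool (fun b => if b then F else G)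

end Formula

/-- Satisfaction of an infinitary formula by an interpretation `I ⊆ σ`. -/
def Sat {σ : Type} (I : Set σ) : Formula σ → Prop
  | .atom p => p ∈ I
  | .conj _ f => ∀ i, Sat I (f i)
  | .disj _ f => ∃ i, Sat I (f i)
  | .impl F G => Sat I F → Sat I G

open Classical in
/-- The reduct `F^I` of a formula `F` with respect to an interpretation `I`. -/
noncomputable def reduct {σ : Type} (I : Set σ) : Formula σ → Formula σ
  | .atom p => if p ∈ I then .atom p else .bot
  | .conj ι f => .conj ι (fun i => reduct I (f i))
  | .disj ι f => .disj ι (fun i => reduct I (f i))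
  | .impl F G => if Sat I (.impl F G) then .impl (reduct I F) (reduct I G) else .bot

/-- `I` is a stable model of a set `H` of infinitary formulas: `I` is minimal with
respect to set inclusion among the interpretations satisfying the reducts (w.r.t. `I`)
of all formulas in `H`. -/
def IsStableModel {σ : Type} (H : Set (Formula σ)) (I : Set σ) : Prop :=
  (∀ F ∈ H, Sat I (reduct I F)) ∧
  ∀ J : Set σ, J ⊆ I → (∀ F ∈ H, Sat J (reduct I F)) → J = I

/-- Strong equivalence of infinitary formulas: `H ∪ {F}` and `H ∪ {G}` have the same
stable models for every set `H` of formulas. -/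
def StronglyEquivalent {σ : Type} (F G : Formula σ) : Prop :=
  ∀ (H : Set (Formula σ)) (I : Set σ),
    IsStableModel (insert F H) I ↔ IsStableModel (insert G H) I

/-! Terms of Abstract Gringo: numerals, the symbols `inf`/`sup`, symbolic
constants, variables, function terms, arithmetic/interval terms, and tuples. -/

inductive AGOp : Type where
  | add | sub | mul | div | interval

inductive AGTerm : Type where
  | num : ℤ → AGTerm
  | inf : AGTerm
  | sup : AGTerm
  | sym : ℕ → AGTerm
  | var : ℕ → AGTerm
  | fn : ℕ → List AGTerm → AGTerm
  | bin : AGOp → AGTerm → AGTerm → AGTerm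
  | tuple : List AGTerm → AGTerm

mutual

/-- `tval t` is the set `[t]` of values of a ground term `t`. -/
def tval : AGTerm → Set AGTerm
  | AGTerm.num n => {u | u = AGTerm.num n}
  | AGTerm.inf => {u | u = AGTerm.inf}
  | AGTerm.sup => {u | u = AGTerm.sup}
  | AGTerm.sym c => {u | u = AGTerm.sym c}
  | AGTerm.var _ => ∅
  | AGTerm.fn f ts => {u | ∃ rs ∈ tvalList ts, u = AGTerm.fn f rs}
  | AGTerm.bin AGOp.add t₁ t₂ =>
      {u | ∃ n₁ n₂ : ℤ, AGTerm.num n₁ ∈ tval t₁ ∧ AGTerm.num n₂ ∈ tval t₂ ∧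
        u = AGTerm.num (n₁ + n₂)}
  | AGTerm.bin AGOp.sub t₁ t₂ =>
      {u | ∃ n₁ n₂ : ℤ, AGTerm.num n₁ ∈ tval t₁ ∧ AGTerm.num n₂ ∈ tval t₂ ∧
        u = AGTerm.num (n₁ - n₂)}
  | AGTerm.bin AGOp.mul t₁ t₂ =>
      {u | ∃ n₁ n₂ : ℤ, AGTerm.num n₁ ∈ tval t₁ ∧ AGTerm.num n₂ ∈ tval t₂ ∧
        u = AGTerm.num (n₁ * n₂)}
  | AGTerm.bin AGOp.div t₁ t₂ =>
      {u | ∃ n₁ n₂ : ℤ, AGTerm.num n₁ ∈ tval t₁ ∧ AGTerm.num n₂ ∈ tval t₂ ∧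
        n₂ ≠ 0 ∧ u = AGTerm.num (Int.fdiv n₁ n₂)}
  | AGTerm.bin AGOp.interval t₁ t₂ =>
      {u | ∃ m n₁ n₂ : ℤ, AGTerm.num n₁ ∈ tval t₁ ∧ AGTerm.num n₂ ∈ tval t₂ ∧
        n₁ ≤ m ∧ m ≤ n₂ ∧ u = AGTerm.num m}
  | AGTerm.tuple ts => {u | ∃ rs ∈ tvalList ts, u = AGTerm.tuple rs}

/-- `tvalList ts` is the set `[t]` of values of a tuple `t` of ground terms
(componentwise evaluation). -/
def tvalList : List AGTerm → Set (List AGTerm)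
  | [] => {l | l = []}
  | t :: ts => {l | ∃ r ∈ tval t, ∃ rs ∈ tvalList ts, l = r :: rs}

end

/-- A term is ground if it contains no variables. -/
inductive Ground : AGTerm → Prop where
  | num (n : ℤ) : Ground (AGTerm.num n)
  | inf : Ground AGTerm.inf
  | sup : Ground AGTerm.sup
  | sym (c : ℕ) : Ground (AGTerm.sym c)
  | fn (f : ℕ) (ts : List AGTerm) : (∀ t ∈ ts, Ground t) → Ground (AGTerm.fn f ts)
  | bin (o : AGOp) (t₁ t₂ : AGTerm) :
      Ground t₁ → Ground t₂ → Ground (AGTerm.bin o t₁ t₂)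
  | tuple (ts : List AGTerm) : (∀ t ∈ ts, Ground t) → Ground (AGTerm.tuple ts)

/-- A term is precomputed if it contains neither variables nor the symbols
`+ - × / ..`. -/
inductive Precomputed : AGTerm → Prop where
  | num (n : ℤ) : Precomputed (AGTerm.num n)
  | inf : Precomputed AGTerm.inf
  | sup : Precomputed AGTerm.sup
  | sym (c : ℕ) : Precomputed (AGTerm.sym c)
  | fn (f : ℕ) (ts : List AGTerm) :
      (∀ t ∈ ts, Precomputed t) → Precomputed (AGTerm.fn f ts)
  | tuple (ts : List AGTerm) :
      (∀ t ∈ ts, Precomputed t) → Precomputed (AGTerm.tuple ts)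

/-- A term is interval-free if it does not contain the symbol `..`. -/
inductive IntervalFree : AGTerm → Prop where
  | num (n : ℤ) : IntervalFree (AGTerm.num n)
  | inf : IntervalFree AGTerm.inf
  | sup : IntervalFree AGTerm.sup
  | sym (c : ℕ) : IntervalFree (AGTerm.sym c)
  | var (v : ℕ) : IntervalFree (AGTerm.var v)
  | fn (f : ℕ) (ts : List AGTerm) :
      (∀ t ∈ ts, IntervalFree t) → IntervalFree (AGTerm.fn f ts)
  | bin (o : AGOp) (t₁ t₂ : AGTerm) : o ≠ AGOp.interval →
      IntervalFree t₁ → IntervalFree t₂ → IntervalFree (AGTerm.bin o t₁ t₂)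
  | tuple (ts : List AGTerm) :
      (∀ t ∈ ts, IntervalFree t) → IntervalFree (AGTerm.tuple ts)

/-- The variable `v` occurs in the term. -/
inductive VarOccurs (v : ℕ) : AGTerm → Prop where
  | var : VarOccurs v (AGTerm.var v)
  | fn {f : ℕ} {ts : List AGTerm} {t : AGTerm} :
      t ∈ ts → VarOccurs v t → VarOccurs v (AGTerm.fn f ts)
  | binLeft {o : AGOp} {t₁ t₂ : AGTerm} :
      VarOccurs v t₁ → VarOccurs v (AGTerm.bin o t₁ t₂)
  | binRight {o : AGOp} {t₁ t₂ : AGTerm} :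
      VarOccurs v t₂ → VarOccurs v (AGTerm.bin o t₁ t₂)
  | tuple {ts : List AGTerm} {t : AGTerm} :
      t ∈ ts → VarOccurs v t → VarOccurs v (AGTerm.tuple ts)

/-- The substitution mapping the variables in the list `xs` to the corresponding
members of the list `rs` (and every other variable to itself). -/
def assign (xs : List ℕ) (rs : List AGTerm) (v : ℕ) : AGTerm :=
  ((xs.zip rs).lookup v).getD (AGTerm.var v)

/-- Applying a substitution to a term. -/
def subst (ρ : ℕ → AGTerm) : AGTerm → AGTerm
  | AGTerm.num n => AGTerm.num n
  | AGTerm.inf => AGTerm.inf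
  | AGTerm.sup => AGTerm.sup
  | AGTerm.sym c => AGTerm.sym c
  | AGTerm.var v => ρ v
  | AGTerm.fn f ts => AGTerm.fn f (ts.attach.map (fun x => subst ρ x.1))
  | AGTerm.bin o t₁ t₂ => AGTerm.bin o (subst ρ t₁) (subst ρ t₂)
  | AGTerm.tuple ts => AGTerm.tuple (ts.attach.map (fun x => subst ρ x.1))
termination_by t => sizeOf t
decreasing_by
  all_goals simp_wf
  all_goals try (cases x; simp_all)
  all_goals first
    | (rename_i hmem; have := List.sizeOf_lt_of_mem hmem; omega)
    | omega

/-- The assumed total order on precomputed terms: `inf` is its least element,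
`sup` is its greatest element, and numerals are ordered according to their
integers. -/
structure AGOrder : Type where
  le : AGTerm → AGTerm → Prop
  refl : ∀ t : AGTerm, Precomputed t → le t t
  trans : ∀ a b c : AGTerm, Precomputed a → Precomputed b → Precomputed c →
    le a b → le b c → le a c
  antisymm : ∀ a b : AGTerm, Precomputed a → Precomputed b →
    le a b → le b a → a = b
  total : ∀ a b : AGTerm, Precomputed a → Precomputed b → le a b ∨ le b a
  inf_le : ∀ t : AGTerm, Precomputed t → le AGTerm.inf t
  le_sup : ∀ t : AGTerm, Precomputed t → le t AGTerm.sup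
  num_le_num : ∀ m n : ℤ, le (AGTerm.num m) (AGTerm.num n) ↔ m ≤ n

/-- The strict order associated with the total order on precomputed terms. -/
def AGOrder.lt (o : AGOrder) (a b : AGTerm) : Prop := o.le a b ∧ a ≠ b

/-- Tuples of precomputed terms of length `k`. -/
def PTuple (k : ℕ) : Type :=
  {r : List AGTerm // r.length = k ∧ ∀ u ∈ r, Precomputed u}

/-- The data of the aggregate elements `t₁ : L₁ ; … ; tₙ : Lₙ` of an aggregate
atom: for each `i`, the list `xᵢ` of variables of `tᵢ : Lᵢ`, the tuple `tᵢ` of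
terms, and the function sending a tuple `r` of precomputed terms (to be
substituted for `xᵢ`) to the infinitary formula `τ∨((Lᵢ)ʳ_{xᵢ})`. -/
structure AggAtom (σ : Type) where
  n : ℕ
  x : Fin n → List ℕ
  t : Fin n → List AGTerm
  L : (i : Fin n) → List AGTerm → Formula σ

/-- The index set `A = {(i, r) : 1 ≤ i ≤ n, r ∈ Aᵢ}`, where `Aᵢ` is the set of
tuples of precomputed terms of the same length as `xᵢ`. -/
def Idx {σ : Type} (E : AggAtom σ) : Type :=
  Σ i : Fin E.n, PTuple (E.x i).length

/-- `[(tᵢ)ʳ_{xᵢ}]` for `a = (i, r) ∈ A`. -/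
def elemVal {σ : Type} (E : AggAtom σ) (a : Idx E) : Set (List AGTerm) :=
  tvalList ((E.t a.1).map (subst (assign (E.x a.1) a.2.1)))

/-- `[Δ]`: the union of the sets `[(tᵢ)ʳ_{xᵢ}]` over `(i, r) ∈ Δ`. -/
def deltaVal {σ : Type} (E : AggAtom σ) (Δ : Set (Idx E)) : Set (List AGTerm) :=
  ⋃ a ∈ Δ, elemVal E a

/-- `τ∨((Lᵢ)ʳ_{xᵢ})` for `a = (i, r) ∈ A`. -/
def fml {σ : Type} (E : AggAtom σ) (a : Idx E) : Formula σ :=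
  E.L a.1 a.2.1

/-- `Δ` justifies the aggregate atom `α{t₁ : L₁ ; … ; tₙ : Lₙ} ≺ s`: the
relation `cmp` (the one denoted by `≺`) holds between `α̂[Δ]` and at least one
precomputed term `u ∈ [s]`. -/
def Justifies {σ : Type} (E : AggAtom σ) (alphaHat : Set (List AGTerm) → AGTerm)
    (cmp : AGTerm → AGTerm → Prop) (s : AGTerm) (Δ : Set (Idx E)) : Prop :=
  ∃ u ∈ tval s, cmp (alphaHat (deltaVal E Δ)) u

/-- `τE`: the conjunction, over all `Δ ⊆ A` that do not justify `E`, of the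
implications `⋀_{(i,r)∈Δ} τ∨((Lᵢ)ʳ_{xᵢ}) → ⋁_{(i,r)∈A∖Δ} τ∨((Lᵢ)ʳ_{xᵢ})`. -/
def tauAgg {σ : Type} (E : AggAtom σ) (justifies : Set (Idx E) → Prop) :
    Formula σ :=
  Formula.conj {Δ : Set (Idx E) // ¬ justifies Δ} (fun Δ =>
    Formula.impl
      (Formula.conj {a : Idx E // a ∈ Δ.1} (fun a => fml E a.1))
      (Formula.disj {a : Idx E // a ∉ Δ.1} (fun a => fml E a.1)))

open Classical in
/-- `ĉount(T)`: the numeral corresponding to the cardinality of `T` if `T` is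
finite, and `sup` otherwise. -/
noncomputable def countHat (T : Set (List AGTerm)) : AGTerm :=
  if T.Finite then AGTerm.num T.ncard else AGTerm.sup

/-- The aggregate elements of the atom `count{1̄..2̄ : p}`: a single element
whose tuple of terms is the one-term tuple `1̄..2̄` (no variables) and whose
condition translates to the propositional atom `p`. -/
def cexAgg16 (σ : Type) (p : σ) : AggAtom σ :=
  ⟨1, fun _ => ([] : List ℕ),
    fun _ => [AGTerm.bin AGOp.interval (AGTerm.num 1) (AGTerm.num 2)],
    fun _ _ => Formula.atom p⟩


section Aux

/-- Strong equivalence follows if the reducts have the same models. -/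
theorem se_of_reduct {σ : Type} {F G : Formula σ}
    (h : ∀ I J : Set σ, Sat J (reduct I F) ↔ Sat J (reduct I G)) :
    StronglyEquivalent F G := by
  have key : ∀ (H : Set (Formula σ)) (I J : Set σ),
      (∀ F' ∈ insert F H, Sat J (reduct I F')) ↔
      (∀ F' ∈ insert G H, Sat J (reduct I F')) := by
    intro H I J
    constructor
    · rintro hs F' (rfl | hF')
      · exact (h I J).1 (hs F (Set.mem_insert _ _))
      · exact hs F' (Set.mem_insert_of_mem _ hF')
    · rintro hs F' (rfl | hF')
      · exact (h I J).2 (hs G (Set.mem_insert _ _))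
      · exact hs F' (Set.mem_insert_of_mem _ hF')
  intro H I
  constructor
  · rintro ⟨h1, h2⟩
    exact ⟨(key H I I).1 h1, fun J hJ hJs => h2 J hJ ((key H I J).2 hJs)⟩
  · rintro ⟨h1, h2⟩
    exact ⟨(key H I I).2 h1, fun J hJ hJs => h2 J hJ ((key H I J).1 hJs)⟩

/-- The unique element of the index set of the counterexample aggregate. -/
def a0 (σ : Type) (p : σ) : Idx (cexAgg16 σ p) :=
  ⟨(⟨0, Nat.one_pos⟩ : Fin 1), ⟨[], rfl, by intro u hu; cases hu⟩⟩

theorem idx_eq {σ : Type} {p : σ} (a : Idx (cexAgg16 σ p)) : a = a0 σ p := by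
  obtain ⟨i, l, hl, hpre⟩ := a
  have hi : i = (⟨0, Nat.one_pos⟩ : Fin 1) := by
    apply Fin.ext
    show i.1 = 0
    have h1 : i.1 < 1 := i.isLt
    omega
  subst hi
  have hl0 : l.length = 0 := hl
  have : l = [] := List.eq_nil_of_length_eq_zero hl0
  subst this
  rfl

theorem tval_interval12 :
    tval (AGTerm.bin AGOp.interval (AGTerm.num 1) (AGTerm.num 2)) =
      {AGTerm.num 1, AGTerm.num 2} := by
  ext u
  simp only [tval, Set.mem_setOf_eq, Set.mem_insert_iff, Set.mem_singleton_iff]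
  constructor
  · rintro ⟨m, n₁, n₂, h1, h2, hm1, hm2, rfl⟩
    simp only [tval, Set.mem_setOf_eq, AGTerm.num.injEq] at h1 h2
    subst h1; subst h2
    have : m = 1 ∨ m = 2 := by omega
    rcases this with rfl | rfl
    · left; rfl
    · right; rfl
  · rintro (rfl | rfl)
    · exact ⟨1, 1, 2, rfl, rfl, le_refl _, by norm_num, rfl⟩
    · exact ⟨2, 1, 2, rfl, rfl, by norm_num, le_refl _, rfl⟩

theorem elemVal_eq {σ : Type} (p : σ) (a : Idx (cexAgg16 σ p)) :
    elemVal (cexAgg16 σ p) a = {[AGTerm.num 1], [AGTerm.num 2]} := by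
  have ha : a = a0 σ p := idx_eq a
  subst ha
  show tvalList
      ([AGTerm.bin AGOp.interval (AGTerm.num 1) (AGTerm.num 2)].map
        (subst (assign [] []))) = _
  have hsub : subst (assign [] [])
      (AGTerm.bin AGOp.interval (AGTerm.num 1) (AGTerm.num 2)) =
      AGTerm.bin AGOp.interval (AGTerm.num 1) (AGTerm.num 2) := by
    simp [subst]
  simp only [List.map_cons, List.map_nil, hsub]
  ext l
  simp only [tvalList, Set.mem_setOf_eq, tval_interval12, Set.mem_insert_iff,
    Set.mem_singleton_iff]
  constructor
  · rintro ⟨r, (rfl | rfl), rs, rfl, rfl⟩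
    · left; rfl
    · right; rfl
  · rintro (rfl | rfl)
    · exact ⟨AGTerm.num 1, Or.inl rfl, [], rfl, rfl⟩
    · exact ⟨AGTerm.num 2, Or.inr rfl, [], rfl, rfl⟩

theorem deltaVal_not_mem {σ : Type} {p : σ} {Δ : Set (Idx (cexAgg16 σ p))}
    (h : a0 σ p ∉ Δ) : deltaVal (cexAgg16 σ p) Δ = ∅ := by
  ext l
  simp only [deltaVal, Set.mem_iUnion, Set.mem_empty_iff_false, iff_false]
  rintro ⟨a, ha, -⟩
  exact h (idx_eq a ▸ ha)

theorem deltaVal_mem {σ : Type} {p : σ} {Δ : Set (Idx (cexAgg16 σ p))}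
    (h : a0 σ p ∈ Δ) :
    deltaVal (cexAgg16 σ p) Δ = {[AGTerm.num 1], [AGTerm.num 2]} := by
  apply subset_antisymm
  · intro l hl
    rcases Set.mem_iUnion₂.1 hl with ⟨a, _, hla⟩
    rw [elemVal_eq p a] at hla
    exact hla
  · intro l hl
    exact Set.mem_biUnion h ((elemVal_eq p (a0 σ p)).symm ▸ hl)

theorem countHat_empty : countHat (∅ : Set (List AGTerm)) = AGTerm.num 0 := by
  rw [countHat, if_pos Set.finite_empty]
  simp

theorem countHat_pair :
    countHat {[AGTerm.num 1], [AGTerm.num 2]} = AGTerm.num 2 := by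
  rw [countHat, if_pos ((Set.finite_singleton _).insert _)]
  rw [Set.ncard_pair (by simp)]
  rfl

theorem justifies_iff {σ : Type} (p : σ) (ord : AGOrder)
    (Δ : Set (Idx (cexAgg16 σ p))) :
    Justifies (cexAgg16 σ p) countHat (fun a b => ord.le b a)
      (AGTerm.num 1) Δ ↔ a0 σ p ∈ Δ := by
  constructor
  · rintro ⟨u, hu, hle⟩
    have hu' : u = AGTerm.num 1 := hu
    subst hu'
    by_contra h
    rw [deltaVal_not_mem h, countHat_empty] at hle
    have := (ord.num_le_num 1 0).1 hle
    omega
  · intro h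
    refine ⟨AGTerm.num 1, rfl, ?_⟩
    rw [deltaVal_mem h, countHat_pair]
    exact (ord.num_le_num 1 2).2 (by norm_num)

theorem ncard_ne_one {σ : Type} (p : σ) (Δ : Set (Idx (cexAgg16 σ p))) :
    ¬((deltaVal (cexAgg16 σ p) Δ).Finite ∧
      ((deltaVal (cexAgg16 σ p) Δ).ncard : ℤ) = 1) := by
  rintro ⟨-, hcard⟩
  by_cases h : a0 σ p ∈ Δ
  · rw [deltaVal_mem h, Set.ncard_pair (by simp)] at hcard
    norm_num at hcard
  · rw [deltaVal_not_mem h, Set.ncard_empty] at hcard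
    norm_num at hcard

end Aux


theorem reduct_impl_pos {σ : Type} {I : Set σ} {A B : Formula σ}
    (h : Sat I (Formula.impl A B)) :
    reduct I (Formula.impl A B) = Formula.impl (reduct I A) (reduct I B) := by
  rw [reduct, if_pos h]

theorem reduct_impl_neg {σ : Type} {I : Set σ} {A B : Formula σ}
    (h : ¬ Sat I (Formula.impl A B)) :
    reduct I (Formula.impl A B) = Formula.bot := by
  rw [reduct, if_neg h]

theorem reduct_atom_pos {σ : Type} {I : Set σ} {q : σ} (h : q ∈ I) :
    reduct I (Formula.atom q) = Formula.atom q := by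
  rw [reduct, if_pos h]

theorem reduct_conj {σ : Type} (I : Set σ) (ι : Type) (f : ι → Formula σ) :
    reduct I (Formula.conj ι f) = Formula.conj ι (fun i => reduct I (f i)) := by
  rw [reduct]

theorem reduct_disj {σ : Type} (I : Set σ) (ι : Type) (f : ι → Formula σ) :
    reduct I (Formula.disj ι f) = Formula.disj ι (fun i => reduct I (f i)) := by
  rw [reduct]

theorem sat_bot {σ : Type} (I : Set σ) : ¬ Sat I (Formula.bot : Formula σ) := by
  rintro ⟨e, -⟩; exact e.elim

theorem sat_top {σ : Type} (I : Set σ) : Sat I (Formula.top : Formula σ) := by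
  rintro ⟨⟩

theorem sat_reduct_top {σ : Type} (I J : Set σ) :
    Sat J (reduct I (Formula.top : Formula σ)) := by
  rw [Formula.top, reduct_conj]
  rintro ⟨⟩

theorem not_sat_reduct_bot {σ : Type} (I J : Set σ) :
    ¬ Sat J (reduct I (Formula.bot : Formula σ)) := by
  rw [Formula.bot, reduct_disj]
  rintro ⟨e, -⟩; exact e.elim

/-- **Interval-freeness of the `tᵢ` cannot be dropped in the counting
theorems.**  For the closed aggregate atom `E = count{1̄..2̄ : p} ≥ 1̄`, the
translation `τE` is (strongly equivalent to) the formula `⊤ → p`, while the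
disjunction over all `Δ ⊆ A` with `|[Δ]| = 1` prescribed by the counting
theorem is the empty disjunction `⊥` (its index set is empty); and `⊤ → p` is
not strongly equivalent to `⊥`. -/
theorem interval_needed_for_counting {σ : Type} (ord : AGOrder) (p : σ) :
    StronglyEquivalent
      (tauAgg (cexAgg16 σ p)
        (Justifies (cexAgg16 σ p) countHat (fun a b => ord.le b a)
          (AGTerm.num 1)))
      (Formula.impl Formula.top (Formula.atom p)) ∧
    {Δ : Set (Idx (cexAgg16 σ p)) |
      (deltaVal (cexAgg16 σ p) Δ).Finite ∧
        ((deltaVal (cexAgg16 σ p) Δ).ncard : ℤ) = 1} = ∅ ∧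
    StronglyEquivalent
      (Formula.disj
        {Δ : Set (Idx (cexAgg16 σ p)) //
          (deltaVal (cexAgg16 σ p) Δ).Finite ∧
            ((deltaVal (cexAgg16 σ p) Δ).ncard : ℤ) = 1}
        (fun Δ => Formula.conj {a : Idx (cexAgg16 σ p) // a ∈ Δ.1}
          (fun a => fml (cexAgg16 σ p) a.1)))
      Formula.bot ∧
    ¬ StronglyEquivalent (Formula.impl Formula.top (Formula.atom p))
        Formula.bot := by
  refine ⟨?_, ?_, ?_, ?_⟩
  · -- τE is strongly equivalent to ⊤ → p
    apply se_of_reduct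
    intro I J
    set just := Justifies (cexAgg16 σ p) countHat (fun a b => ord.le b a)
      (AGTerm.num 1) with hjust
    have hnj : ∀ Δ : Set (Idx (cexAgg16 σ p)), ¬ just Δ ↔ a0 σ p ∉ Δ := by
      intro Δ; rw [hjust, justifies_iff]
    have hfml : ∀ a : Idx (cexAgg16 σ p),
        fml (cexAgg16 σ p) a = Formula.atom p := fun a => rfl
    have hA : ∀ (K : Set σ) (Δ : Set (Idx (cexAgg16 σ p))), a0 σ p ∉ Δ →
        Sat K (Formula.conj {a : Idx (cexAgg16 σ p) // a ∈ Δ}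
          (fun a => fml (cexAgg16 σ p) a.1)) := by
      rintro K Δ hΔ ⟨a, ha⟩
      exact absurd (idx_eq a ▸ ha) hΔ
    have hB : ∀ (K : Set σ) (Δ : Set (Idx (cexAgg16 σ p))), a0 σ p ∉ Δ →
        (Sat K (Formula.disj {a : Idx (cexAgg16 σ p) // a ∉ Δ}
          (fun a => fml (cexAgg16 σ p) a.1)) ↔ p ∈ K) := by
      intro K Δ hΔ
      constructor
      · rintro ⟨x, hx⟩; exact hx
      · intro h; exact ⟨⟨a0 σ p, hΔ⟩, h⟩
    have hsatimp : ∀ Δ : Set (Idx (cexAgg16 σ p)), a0 σ p ∉ Δ →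
        (Sat I (Formula.impl
          (Formula.conj {a : Idx (cexAgg16 σ p) // a ∈ Δ}
            (fun a => fml (cexAgg16 σ p) a.1))
          (Formula.disj {a : Idx (cexAgg16 σ p) // a ∉ Δ}
            (fun a => fml (cexAgg16 σ p) a.1))) ↔ p ∈ I) := by
      intro Δ hΔ
      constructor
      · intro h; exact (hB I Δ hΔ).1 (h (hA I Δ hΔ))
      · intro h _; exact (hB I Δ hΔ).2 h
    have hNJ : ¬ just (∅ : Set (Idx (cexAgg16 σ p))) := by
      rw [hnj]; exact Set.notMem_empty _
    by_cases hp : p ∈ I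
    · -- both reducts are satisfied by J iff p ∈ J
      have hsatR : Sat I (Formula.impl Formula.top (Formula.atom p)) := by
        intro _; exact hp
      have hR : Sat J (reduct I (Formula.impl Formula.top (Formula.atom p))) ↔
          p ∈ J := by
        rw [reduct_impl_pos hsatR]
        constructor
        · intro h
          have hx := h (sat_reduct_top I J)
          rwa [reduct_atom_pos hp] at hx
        · intro h _
          rw [reduct_atom_pos hp]
          exact h
      have himpJ : ∀ Δ : Set (Idx (cexAgg16 σ p)), a0 σ p ∉ Δ →
          (Sat J (reduct I (Formula.impl
            (Formula.conj {a : Idx (cexAgg16 σ p) // a ∈ Δ}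
              (fun a => fml (cexAgg16 σ p) a.1))
            (Formula.disj {a : Idx (cexAgg16 σ p) // a ∉ Δ}
              (fun a => fml (cexAgg16 σ p) a.1)))) ↔ p ∈ J) := by
        intro Δ hΔ
        rw [reduct_impl_pos ((hsatimp Δ hΔ).2 hp)]
        constructor
        · intro h
          have hant : Sat J (reduct I
              (Formula.conj {a : Idx (cexAgg16 σ p) // a ∈ Δ}
                (fun a => fml (cexAgg16 σ p) a.1))) := by
            rw [reduct_conj]
            rintro ⟨a, ha⟩
            exact absurd (idx_eq a ▸ ha) hΔ
          have hcons := h hant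
          rw [reduct_disj] at hcons
          obtain ⟨x, hx⟩ := hcons
          have hx2 : Sat J (reduct I (fml (cexAgg16 σ p) x.1)) := hx
          rw [hfml, reduct_atom_pos hp] at hx2
          exact hx2
        · intro h _
          rw [reduct_disj]
          refine ⟨⟨a0 σ p, hΔ⟩, ?_⟩
          show Sat J (reduct I (fml (cexAgg16 σ p) (a0 σ p)))
          rw [hfml, reduct_atom_pos hp]
          exact h
      have hL : Sat J (reduct I (tauAgg (cexAgg16 σ p) just)) ↔ p ∈ J := by
        rw [tauAgg, reduct_conj]
        constructor
        · intro h
          exact (himpJ ∅ (Set.notMem_empty _)).1 (h ⟨∅, hNJ⟩)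
        · intro h Δ
          exact (himpJ Δ.1 ((hnj Δ.1).1 Δ.2)).2 h
      rw [hL, hR]
    · -- both reducts are unsatisfiable
      have hnsatR : ¬ Sat I (Formula.impl Formula.top (Formula.atom p)) := by
        intro hs
        exact hp (hs (sat_top I))
      have hR : ¬ Sat J (reduct I (Formula.impl Formula.top (Formula.atom p))) := by
        rw [reduct_impl_neg hnsatR]
        exact sat_bot J
      have hL : ¬ Sat J (reduct I (tauAgg (cexAgg16 σ p) just)) := by
        rw [tauAgg, reduct_conj]
        intro h
        have h0 : Sat J (reduct I (Formula.impl
            (Formula.conj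
              {a : Idx (cexAgg16 σ p) // a ∈ (∅ : Set (Idx (cexAgg16 σ p)))}
              (fun a => fml (cexAgg16 σ p) a.1))
            (Formula.disj
              {a : Idx (cexAgg16 σ p) // a ∉ (∅ : Set (Idx (cexAgg16 σ p)))}
              (fun a => fml (cexAgg16 σ p) a.1)))) := h ⟨∅, hNJ⟩
        rw [reduct_impl_neg
          (fun hs => hp ((hsatimp ∅ (Set.notMem_empty _)).1 hs))] at h0
        exact sat_bot J h0
      exact iff_of_false hL hR
  · -- the index set of the disjunction is empty
    ext Δ
    simp only [Set.mem_setOf_eq, Set.mem_empty_iff_false, iff_false]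
    exact ncard_ne_one p Δ
  · -- the (empty) disjunction is strongly equivalent to ⊥
    apply se_of_reduct
    intro I J
    rw [reduct_disj]
    constructor
    · rintro ⟨⟨Δ, hΔ⟩, -⟩
      exact absurd hΔ (ncard_ne_one p Δ)
    · intro h
      exact absurd h (not_sat_reduct_bot I J)
  · -- ⊤ → p is not strongly equivalent to ⊥
    intro hSE
    have hsat : Sat ({p} : Set σ) (Formula.impl Formula.top (Formula.atom p)) := by
      intro _; exact rfl
    have hstable : IsStableModel
        (insert (Formula.impl Formula.top (Formula.atom p)) ∅) {p} := by
      constructor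
      · rintro F (rfl | hF)
        · rw [reduct_impl_pos hsat]
          intro _
          rw [reduct_atom_pos (show p ∈ ({p} : Set σ) from rfl)]
          exact rfl
        · cases hF
      · intro J hJ hJs
        have h1 := hJs _ (Set.mem_insert _ _)
        rw [reduct_impl_pos hsat] at h1
        have hpJ : p ∈ J := by
          have hx := h1 (sat_reduct_top _ _)
          rwa [reduct_atom_pos (show p ∈ ({p} : Set σ) from rfl)] at hx
        apply Set.Subset.antisymm hJ
        intro x hx
        rw [Set.mem_singleton_iff] at hx
        subst hx
        exact hpJ
    have hbotstable := (hSE ∅ {p}).1 hstable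
    have hbot := hbotstable.1 Formula.bot (Set.mem_insert _ _)
    exact not_sat_reduct_bot _ _ hbot

end AG
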